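/- arXiv:1903.02344 — 6 statements merged into one kernel-verified Lean document; each statement's English description precedes it below -/
import Mathlib

section
/- Let G be a generator of a team property P over a fixed finite domain, i.e., a set of pairs (S, U) of teams with S ⊆ U such that a team T satisfies P iff some (S, U) ∈ G has S ⊆ T ⊆ U. If P has m distinct maximal teams (teams satisfying P such that no proper superteam satisfies P), then G contains at least m distinct upper bounds U, i.e., |{U : (S,U) ∈ G}| ≥ m. -/
theorem generator_upper_bounds_ge_maximal_teams {α : Type*}
    (P : Set (Set α)) (G : Set (Set α × Set α))
    (hsub : ∀ p ∈ G, p.1 ⊆ p.2)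
    (hgen : ∀ T : Set α, T ∈ P ↔ ∃ p ∈ G, p.1 ⊆ T ∧ T ⊆ p.2)
    (M : Set (Set α))
    (hmax : ∀ X ∈ M, X ∈ P ∧ ∀ Y : Set α, X ⊂ Y → Y ∉ P) :
    ∃ f : M → {U : Set α // ∃ S, (S, U) ∈ G}, Function.Injective f := by
  have key : ∀ X : M, ∃ S, (S, (X : Set α)) ∈ G := by
    rintro ⟨X, hX⟩
    obtain ⟨hXP, hXmax⟩ := hmax X hX
    obtain ⟨p, hpG, hp1, hp2⟩ := (hgen X).1 hXP
    have hUP : p.2 ∈ P := (hgen p.2).2 ⟨p, hpG, hsub p hpG, subset_rfl⟩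
    have hXU : X = p.2 := by
      by_contra h
      exact hXmax p.2 (hp2.ssubset_of_ne h) hUP
    refine ⟨p.1, ?_⟩
    simp only [hXU]
    exact hpG
  refine ⟨fun X => ⟨(X : Set α), key X⟩, fun X Y h => ?_⟩
  simpa [Subtype.ext_iff] using h
end

section
/- If G₁ generates team property P₁ and G₂ generates team property P₂, then the set {(S₁ ∪ S₂, U₁ ∪ U₂) : (S₁,U₁) ∈ G₁, (S₂,U₂) ∈ G₂} generates the lax splitting disjunction of P₁ and P₂, the property satisfied by T iff there exist T₁, T₂ with T₁ ∪ T₂ = T, T₁ ∈ P₁, and T₂ ∈ P₂. -/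
theorem generator_lax_disjunction {α : Type*}
    (P₁ P₂ : Set (Set α)) (G₁ G₂ : Set (Set α × Set α))
    (hsub₁ : ∀ p ∈ G₁, p.1 ⊆ p.2) (hsub₂ : ∀ p ∈ G₂, p.1 ⊆ p.2)
    (hgen₁ : ∀ T : Set α, T ∈ P₁ ↔ ∃ p ∈ G₁, p.1 ⊆ T ∧ T ⊆ p.2)
    (hgen₂ : ∀ T : Set α, T ∈ P₂ ↔ ∃ p ∈ G₂, p.1 ⊆ T ∧ T ⊆ p.2) :
    ∀ T : Set α, (∃ T₁ T₂ : Set α, T₁ ∪ T₂ = T ∧ T₁ ∈ P₁ ∧ T₂ ∈ P₂) ↔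
      ∃ p ∈ ({q | ∃ p₁ ∈ G₁, ∃ p₂ ∈ G₂, q = (p₁.1 ∪ p₂.1, p₁.2 ∪ p₂.2)} :
        Set (Set α × Set α)), p.1 ⊆ T ∧ T ⊆ p.2 := by
  intro T
  constructor
  · rintro ⟨T₁, T₂, rfl, h₁, h₂⟩
    obtain ⟨p₁, hp₁, hs₁, hu₁⟩ := (hgen₁ T₁).1 h₁
    obtain ⟨p₂, hp₂, hs₂, hu₂⟩ := (hgen₂ T₂).1 h₂
    exact ⟨(p₁.1 ∪ p₂.1, p₁.2 ∪ p₂.2), ⟨p₁, hp₁, p₂, hp₂, rfl⟩,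
      Set.union_subset_union hs₁ hs₂, Set.union_subset_union hu₁ hu₂⟩
  · rintro ⟨p, ⟨p₁, hp₁, p₂, hp₂, rfl⟩, hS, hU⟩
    refine ⟨p₁.1 ∪ (T ∩ p₁.2), p₂.1 ∪ (T ∩ p₂.2), ?_, ?_, ?_⟩
    · apply Set.Subset.antisymm
      · intro x hx
        rcases hx with (h | h) | (h | h)
        · exact hS (Or.inl h)
        · exact h.1
        · exact hS (Or.inr h)
        · exact h.1
      · intro x hx
        rcases hU hx with h | h
        · exact Or.inl (Or.inr ⟨hx, h⟩)
        · exact Or.inr (Or.inr ⟨hx, h⟩)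
    · exact (hgen₁ _).2 ⟨p₁, hp₁, Set.subset_union_left,
        Set.union_subset (hsub₁ p₁ hp₁) Set.inter_subset_right⟩
    · exact (hgen₂ _).2 ⟨p₂, hp₂, Set.subset_union_left,
        Set.union_subset (hsub₂ p₂ hp₂) Set.inter_subset_right⟩
end

section
/- For n ≥ 1, the full team T over domain {p₁,…,pₙ,q} (containing all 2^(n+1) assignments) satisfies the anonymity atom p₁⋯pₙ Υ q, and for every assignment s ∈ T, the neighbour T \ {s} does not satisfy the anonymity atom. Hence T has 2^(n+1) neighbours violating the atom. -/
/-- An assignment over domain {p₁,…,pₙ,q}. -/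
abbrev AnonAssign (n : ℕ) := (Fin n → Bool) × Bool

/-- The anonymity atom p⃗ Υ q. -/
def AnonAtom {n : ℕ} (T : Set (AnonAssign n)) : Prop :=
  ∀ s ∈ T, ∃ s' ∈ T, s.1 = s'.1 ∧ s.2 ≠ s'.2

theorem anonymity_full_team_neighbours (n : ℕ) (hn : 1 ≤ n) :
    AnonAtom (Set.univ : Set (AnonAssign n)) ∧
    ∀ s : AnonAssign n, ¬ AnonAtom ((Set.univ : Set (AnonAssign n)) \ {s}) := by
  constructor
  · intro s _
    exact ⟨(s.1, !s.2), trivial, rfl, by simp⟩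
  · intro s h
    obtain ⟨t, ht, h1, h2⟩ := h (s.1, !s.2) ⟨trivial, by simp [Prod.ext_iff]⟩
    have : t = s := by
      obtain ⟨tf, tb⟩ := t
      simp at h1 h2
      cases s.2 <;> cases tb <;> simp_all [Prod.ext_iff] <;> exact h1.symm
    exact ht.2 (by simp [this])
end

section
/- For n ≥ 1, the full team T over domain {p₁,…,pₙ,q₁,…,qₘ} (all 2^(n+m) assignments) satisfies the independence atom p⃗ ⊥ q⃗, and removing any single assignment yields a team that violates it. Thus T has 2^(n+m) neighbours not satisfying the atom. -/
/-- An assignment over domain {p₁,…,pₙ,q₁,…,qₘ}. -/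
abbrev IndAssign (n m : ℕ) := (Fin n → Bool) × (Fin m → Bool)

/-- The independence atom p⃗ ⊥ q⃗. -/
def IndAtom {n m : ℕ} (T : Set (IndAssign n m)) : Prop :=
  ∀ s ∈ T, ∀ s' ∈ T, ∃ s'' ∈ T, s''.1 = s.1 ∧ s''.2 = s'.2

theorem independence_full_team_neighbours (n m : ℕ) (hn : 1 ≤ n) (hm : 1 ≤ m) :
    IndAtom (Set.univ : Set (IndAssign n m)) ∧
    ∀ s : IndAssign n m, ¬ IndAtom ((Set.univ : Set (IndAssign n m)) \ {s}) := by
  constructor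
  · intro s _ s' _
    exact ⟨(s.1, s'.2), trivial, rfl, rfl⟩
  · intro s h
    have i0 : Fin n := ⟨0, hn⟩
    have j0 : Fin m := ⟨0, hm⟩
    set a : IndAssign n m := (s.1, fun j => !(s.2 j)) with ha
    set b : IndAssign n m := (fun i => !(s.1 i), s.2) with hb
    have haT : a ∈ (Set.univ : Set (IndAssign n m)) \ {s} := by
      refine ⟨trivial, ?_⟩
      intro hcontra
      have : a.2 j0 = s.2 j0 := by rw [hcontra]
      simp [ha] at this
    have hbT : b ∈ (Set.univ : Set (IndAssign n m)) \ {s} := by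
      refine ⟨trivial, ?_⟩
      intro hcontra
      have : b.1 i0 = s.1 i0 := by rw [hcontra]
      simp [hb] at this
    obtain ⟨c, hcT, hc1, hc2⟩ := h a haT b hbT
    apply hcT.2
    have : c = s := by
      apply Prod.ext <;> simp [ha, hb] at hc1 hc2 ⊢ <;> assumption
    simpa using this
end

section
/- For n ≥ 1, define assignments sᵢ over domain {p₁,…,pₙ,q₁,…,qₙ} for 0 ≤ i < 2ⁿ by: (sᵢ(p₁),…,sᵢ(pₙ)) is the binary representation of i and (sᵢ(q₁),…,sᵢ(qₙ)) is the binary representation of (i+1) mod 2ⁿ. Then the team T = {s₀,…,s_{2ⁿ−1}} satisfies the inclusion atom p⃗ ⊆ q⃗, but for every i, the team T \ {sᵢ} does not. Hence T has 2ⁿ neighbours violating the inclusion atom. -/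
/-- An assignment over domain {p₁,…,pₙ,q₁,…,qₙ}. -/
abbrev IncAssign (n : ℕ) := (Fin n → Bool) × (Fin n → Bool)

/-- The inclusion atom p⃗ ⊆ q⃗. -/
def IncAtom {n : ℕ} (T : Set (IncAssign n)) : Prop :=
  ∀ s ∈ T, ∃ s' ∈ T, s.1 = s'.2

/-- Binary representation of a natural number as n bits. -/
def binRep (n : ℕ) (i : ℕ) : Fin n → Bool := fun k => i.testBit k

/-- The assignment sᵢ: p⃗ is the binary representation of i, q⃗ that of (i+1) mod 2ⁿ. -/
def incWitness (n : ℕ) (i : ℕ) : IncAssign n :=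
  (binRep n i, binRep n ((i + 1) % 2 ^ n))

/-! Both halves hold for any team `{(b i, b (f i)) | i ∈ S}` where `f` permutes `S` and `b` is
injective on `S`: every value `b i` of `p⃗` is the value of `q⃗` at the predecessor of `i`, and at
that predecessor only. So deleting the assignment at `i` leaves the assignment at `f i` without a
partner, as long as `f i ≠ i`. The binary counter is the case `f i = (i + 1) mod 2ⁿ`. -/

open Set

section CycleTeam

variable {α : Type*} {n : ℕ} {S : Set α} {f : α → α} {b : α → Fin n → Bool}

theorem incAtom_image_of_surjOn (hf : SurjOn f S S) :
    IncAtom ((fun i => (b i, b (f i))) '' S) := by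
  rintro _ ⟨i, hi, rfl⟩
  obtain ⟨j, hj, hji⟩ := hf hi
  exact ⟨_, mem_image_of_mem _ hj, by simp only [hji]⟩

theorem not_incAtom_image_diff_singleton (hf : BijOn f S S) (hb : InjOn b S) {i : α}
    (hi : i ∈ S) (hfi : f i ≠ i) :
    ¬ IncAtom ((fun i => (b i, b (f i))) '' S \ {(b i, b (f i))}) := by
  intro h
  have hfiS : f i ∈ S := hf.mapsTo hi
  have hsucc_mem : (b (f i), b (f (f i))) ∈ (fun i => (b i, b (f i))) '' S \ {(b i, b (f i))} :=
    ⟨mem_image_of_mem _ hfiS, fun heq => hfi (hb hfiS hi (congrArg Prod.fst heq))⟩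
  obtain ⟨_, ⟨⟨k, hk, rfl⟩, hk_ne⟩, hbk⟩ := h _ hsucc_mem
  have hki : k = i := hf.injOn hk hi (hb (hf.mapsTo hk) hfiS hbk.symm)
  exact hk_ne (by rw [hki]; rfl)

end CycleTeam

theorem binRep_injOn (n : ℕ) : InjOn (binRep n) (Iio (2 ^ n)) := by
  intro a ha b hb h
  apply Nat.eq_of_testBit_eq
  intro k
  by_cases hk : k < n
  · exact congrFun h ⟨k, hk⟩
  · have hpow : 2 ^ n ≤ 2 ^ k := Nat.pow_le_pow_right two_pos (not_lt.mp hk)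
    rw [Nat.testBit_lt_two_pow (lt_of_lt_of_le ha hpow),
      Nat.testBit_lt_two_pow (lt_of_lt_of_le hb hpow)]

theorem bijOn_succ_mod {N : ℕ} (hN : 0 < N) :
    BijOn (fun i => (i + 1) % N) (Iio N) (Iio N) := by
  have hmaps : MapsTo (fun i => (i + 1) % N) (Iio N) (Iio N) := fun _ _ => Nat.mod_lt _ hN
  refine (finite_Iio N).injOn_iff_bijOn_of_mapsTo hmaps |>.mp ?_
  intro a ha b hb h
  have hab : a % N = b % N := Nat.ModEq.add_right_cancel' 1 h
  rwa [Nat.mod_eq_of_lt (show a < N from ha), Nat.mod_eq_of_lt (show b < N from hb)] at hab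

theorem succ_mod_ne_self {N i : ℕ} (hN : 2 ≤ N) (hi : i < N) : (i + 1) % N ≠ i := by
  rcases (show i + 1 ≤ N from hi).lt_or_eq with h | h
  · rw [Nat.mod_eq_of_lt h]; omega
  · rw [h, Nat.mod_self]; omega

theorem inclusion_cycle_team_neighbours (n : ℕ) (hn : 1 ≤ n) :
    IncAtom {s : IncAssign n | ∃ i < 2 ^ n, s = incWitness n i} ∧
    ∀ i < 2 ^ n,
      ¬ IncAtom ({s : IncAssign n | ∃ j < 2 ^ n, s = incWitness n j} \ {incWitness n i}) := by
  have hteam :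
      {s : IncAssign n | ∃ i < 2 ^ n, s = incWitness n i} = incWitness n '' Iio (2 ^ n) := by
    ext s
    simp only [mem_ofPred_eq, mem_image, mem_Iio, eq_comm]
  have hbij : BijOn (fun i => (i + 1) % 2 ^ n) (Iio (2 ^ n)) (Iio (2 ^ n)) :=
    bijOn_succ_mod (Nat.two_pow_pos n)
  have htwo : 2 ≤ 2 ^ n := by simpa using Nat.pow_le_pow_right two_pos hn
  rw [hteam]
  exact ⟨incAtom_image_of_surjOn hbij.surjOn, fun i hi =>
    not_incAtom_image_diff_singleton hbij (binRep_injOn n) hi (succ_mod_ne_self htwo hi)⟩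
end

section
/- For tuples of propositions p⃗ = (p₁,…,pₙ) and β⃗ = (β₁,…,βₘ), a team T satisfies the general anonymity atom p⃗ Υ β⃗ if and only if T can be written as a union T = Y₁ ∪ ⋯ ∪ Yₘ of pairwise disjoint subteams such that Yᵢ satisfies the unary anonymity atom p⃗ Υ βᵢ for each i (i.e., the atom equals the strict m-fold splitting disjunction of the unary atoms). -/
/-- An assignment: the values of p⃗ and of β⃗. -/
abbrev AnAssign (n m : ℕ) := (Fin n → Bool) × (Fin m → Bool)

/-- The general anonymity atom p⃗ Υ β⃗. -/
def GenAnon {n m : ℕ} (T : Set (AnAssign n m)) : Prop :=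
  ∀ s ∈ T, ∃ s' ∈ T, s.1 = s'.1 ∧ s.2 ≠ s'.2

/-- The unary anonymity atom p⃗ Υ βᵢ. -/
def UnaryAnon {n m : ℕ} (i : Fin m) (T : Set (AnAssign n m)) : Prop :=
  ∀ s ∈ T, ∃ s' ∈ T, s.1 = s'.1 ∧ s.2 i ≠ s'.2 i

lemma exists_least_fin {m : ℕ} (P : Fin m → Prop) (h : ∃ i, P i) :
    ∃ i, P i ∧ ∀ j, j < i → ¬ P j := by
  obtain ⟨i, hi, hmin⟩ := (wellFounded_lt (α := Fin m)).has_min {i | P i} h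
  exact ⟨i, hi, fun j hj hPj => hmin j hPj hj⟩

theorem general_anonymity_iff_strict_split {n m : ℕ} (T : Set (AnAssign n m)) :
    GenAnon T ↔ ∃ Y : Fin m → Set (AnAssign n m),
      (⋃ i, Y i) = T ∧
      (∀ i j, i ≠ j → Y i ∩ Y j = ∅) ∧
      (∀ i, UnaryAnon i (Y i)) := by
  constructor
  · intro hG
    -- P s i : s has a witness differing at coordinate i
    set P : AnAssign n m → Fin m → Prop :=
      fun s i => ∃ s' ∈ T, s.1 = s'.1 ∧ s.2 i ≠ s'.2 i with hP
    refine ⟨fun i => {s | s ∈ T ∧ P s i ∧ ∀ j, j < i → ¬ P s j}, ?_, ?_, ?_⟩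
    · ext s
      simp only [Set.mem_iUnion, Set.mem_setOf_eq]
      constructor
      · rintro ⟨i, hs, _⟩; exact hs
      · intro hs
        obtain ⟨s', hs'T, hp, hne⟩ := hG s hs
        have hex : ∃ i, P s i := by
          obtain ⟨i, hi⟩ := Function.ne_iff.mp hne
          exact ⟨i, s', hs'T, hp, hi⟩
        obtain ⟨i, hi, hmin⟩ := exists_least_fin _ hex
        exact ⟨i, hs, hi, hmin⟩
    · intro i j hij
      ext s
      simp only [Set.mem_inter_iff, Set.mem_setOf_eq, Set.mem_empty_iff_false, iff_false]
      rintro ⟨⟨_, hPi, hmini⟩, ⟨_, hPj, hminj⟩⟩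
      rcases lt_or_gt_of_ne hij with h | h
      · exact hminj i h hPi
      · exact hmini j h hPj
    · rintro i s ⟨hsT, ⟨s', hs'T, hp, hd⟩, hmin⟩
      refine ⟨s', ⟨hs'T, ⟨s, hsT, hp.symm, fun h => hd h.symm⟩, ?_⟩, hp, hd⟩
      rintro j hj ⟨s'', hs''T, hp2, hd2⟩
      -- s agrees with s' at j (else P s j), so s differs from s'' at j: P s j, contradiction
      have h1 : s.2 j = s'.2 j := by
        by_contra hne
        exact hmin j hj ⟨s', hs'T, hp, hne⟩
      exact hmin j hj ⟨s'', hs''T, hp.trans hp2, by rw [h1]; exact hd2⟩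
  · rintro ⟨Y, hU, _, hun⟩ s hs
    rw [← hU] at hs
    obtain ⟨i, hi⟩ := Set.mem_iUnion.mp hs
    obtain ⟨s', hs', hp, hd⟩ := hun i s hi
    have hs'T : s' ∈ T := hU ▸ Set.mem_iUnion.mpr ⟨i, hs'⟩
    exact ⟨s', hs'T, hp, fun h => hd (congrFun h i)⟩
end
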